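/- Let f be an Eisenstein polynomial of degree n = p^r·e_0 over a finite extension K of Q_p, with gcd(p, e_0) = 1 and e_0 ≠ 1. Let α be a root of f and ρ(x) = f(αx + α)/α^n the ramification polynomial. Then the Newton polygon of ρ has a horizontal segment (slope 0) of length p^r(e_0 − 1) from abscissa p^r to abscissa n, and the residual polynomial of this horizontal segment is Σ_{i=0}^{n−p^r} c_i x^i, where c_i is the residue class of the binomial coefficient C(n, i + p^r), and c_i ≠ 0 if and only if v_p(C(n, i + p^r)) = 0. -/

import Mathlib

open Polynomial

/-- An additive valuation `v` (written additively, with `v 0 = ⊤`) on a field `Ω`,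
extending the `p`-adic valuation of `ℚ_[p]` (scaled by the ramification index `e`),
taking integer values on an intermediate field `K` and normalized so that a
uniformizer `unif` of `K` has valuation `1`. -/
structure PadicSetup (p : ℕ) [Fact p.Prime] (K Ω : Type*) [Field K] [Field Ω]
    [Algebra ℚ_[p] K] [Algebra ℚ_[p] Ω] [Algebra K Ω] [IsScalarTower ℚ_[p] K Ω] where
  v : Ω → WithTop ℚ
  v_top_iff : ∀ x : Ω, v x = ⊤ ↔ x = 0
  v_mul : ∀ x y : Ω, v (x * y) = v x + v y
  v_add : ∀ x y : Ω, min (v x) (v y) ≤ v (x + y)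
  e : ℕ
  e_pos : 0 < e
  v_padic : ∀ x : ℚ_[p], x ≠ 0 →
    v (algebraMap ℚ_[p] Ω x) = (((e : ℤ) * x.valuation : ℤ) : ℚ)
  v_int : ∀ x : K, x ≠ 0 → ∃ m : ℤ, v (algebraMap K Ω x) = ((m : ℚ) : WithTop ℚ)
  unif : K
  v_unif : v (algebraMap K Ω unif) = 1

variable {p : ℕ} [Fact p.Prime] {K Ω : Type*} [Field K] [Field Ω]
    [Algebra ℚ_[p] K] [Algebra ℚ_[p] Ω] [Algebra K Ω] [IsScalarTower ℚ_[p] K Ω]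

/-- `f` is an Eisenstein polynomial of degree `n` over `K` (with respect to the
normalized valuation of `K`): monic of degree `n`, all lower coefficients have
valuation at least `1`, and the constant coefficient has valuation exactly `1`. -/
def PadicSetup.IsEisensteinOfDegree (S : PadicSetup p K Ω) (f : K[X]) (n : ℕ) : Prop :=
  f.Monic ∧ f.natDegree = n ∧ (∀ i < n, 1 ≤ S.v (algebraMap K Ω (f.coeff i))) ∧
    S.v (algebraMap K Ω (f.coeff 0)) = 1

/-- The `i`-th coefficient of the ramification polynomial `ρ(x) = f(αx+α)/αⁿ` of `f`,
namely `ρ_i = ∑_{k=i}^n C(k,i) f_k α^{k-n}`. -/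
noncomputable def PadicSetup.rho (S : PadicSetup p K Ω) (f : K[X]) (n : ℕ) (α : Ω)
    (i : ℕ) : Ω :=
  ∑ k ∈ Finset.Icc i n, (k.choose i : Ω) * algebraMap K Ω (f.coeff k) * α ^ ((k : ℤ) - (n : ℤ))

namespace PadicSetup
variable (S : PadicSetup p K Ω)

lemma v_zero' : S.v 0 = ⊤ := (S.v_top_iff 0).mpr rfl

lemma v_ne_top' {x : Ω} (hx : x ≠ 0) : S.v x ≠ ⊤ := fun h => hx ((S.v_top_iff x).mp h)

lemma exists_rat' {x : Ω} (hx : x ≠ 0) : ∃ q : ℚ, S.v x = (q : ℚ) := by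
  obtain ⟨q, hq⟩ := WithTop.ne_top_iff_exists.mp (S.v_ne_top' hx)
  exact ⟨q, hq.symm⟩

lemma v_one' : S.v 1 = 0 := by
  have h := S.v_mul 1 1
  rw [mul_one] at h
  obtain ⟨q, hq⟩ := S.exists_rat' (one_ne_zero (α := Ω))
  rw [hq] at h ⊢
  have : q = q + q := by exact_mod_cast h
  have : q = 0 := by linarith
  exact_mod_cast this

lemma v_neg' (x : Ω) : S.v (-x) = S.v x := by
  rcases eq_or_ne x 0 with rfl | hx
  · rw [neg_zero]
  have hm1 : S.v (-1 : Ω) = 0 := by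
    have h := S.v_mul (-1 : Ω) (-1)
    rw [neg_mul_neg, one_mul, S.v_one'] at h
    obtain ⟨q, hq⟩ := S.exists_rat' (neg_ne_zero.mpr (one_ne_zero (α := Ω)))
    rw [hq] at h ⊢
    have : (0:ℚ) = q + q := by exact_mod_cast h
    have : q = 0 := by linarith
    exact_mod_cast this
  calc S.v (-x) = S.v ((-1) * x) := by ring_nf
  _ = S.v (-1:Ω) + S.v x := S.v_mul _ _
  _ = S.v x := by rw [hm1, zero_add]

lemma v_inv' {x : Ω} (hx : x ≠ 0) {q : ℚ} (hq : S.v x = (q:ℚ)) : S.v x⁻¹ = ((-q : ℚ) : WithTop ℚ) := by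
  obtain ⟨q', hq'⟩ := S.exists_rat' (inv_ne_zero hx)
  have h := S.v_mul x x⁻¹
  rw [mul_inv_cancel₀ hx, S.v_one', hq, hq'] at h
  have : (0:ℚ) = q + q' := by exact_mod_cast h
  have : q' = -q := by linarith
  rw [hq', this]

lemma v_pow' {x : Ω} (hx : x ≠ 0) {q : ℚ} (hq : S.v x = (q:ℚ)) (m : ℕ) :
    S.v (x ^ m) = ((m * q : ℚ) : WithTop ℚ) := by
  induction m with
  | zero => simpa using S.v_one'
  | succ m ih =>
    rw [pow_succ, S.v_mul, ih, hq, ← WithTop.coe_add]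
    norm_cast
    push_cast
    ring

lemma v_sum_ge {ι : Type*} (s : Finset ι) (g : ι → Ω) (c : WithTop ℚ)
    (h : ∀ i ∈ s, c ≤ S.v (g i)) : c ≤ S.v (∑ i ∈ s, g i) := by
  induction s using Finset.cons_induction with
  | empty => rw [Finset.sum_empty, S.v_zero']; exact le_top
  | cons a s ha ih =>
    rw [Finset.sum_cons]
    refine le_trans ?_ (S.v_add _ _)
    exact le_min (h a (Finset.mem_cons_self a s)) (ih fun i hi => h i (Finset.mem_cons_of_mem hi))

lemma v_add_eq_left' {x y : Ω} (h : S.v x < S.v y) : S.v (x + y) = S.v x := by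
  have h1 : S.v x ≤ S.v (x + y) := le_trans (by rw [min_eq_left h.le]) (S.v_add x y)
  refine le_antisymm ?_ h1
  by_contra hc
  push_neg at hc
  have hxy : x = (x + y) + (-y) := by ring
  have h2 : min (S.v (x + y)) (S.v (-y)) ≤ S.v x := by
    conv_rhs => rw [hxy]
    exact S.v_add _ _
  rw [S.v_neg'] at h2
  exact absurd h2 (not_le.mpr (lt_min hc h))

lemma v_natCast' (m : ℕ) (hm : m ≠ 0) :
    S.v (m : Ω) = (((S.e * padicValNat p m : ℕ) : ℚ) : WithTop ℚ) := by
  have h1 : (m : Ω) = algebraMap ℚ_[p] Ω (m : ℚ_[p]) := (map_natCast _ m).symm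
  rw [h1, S.v_padic _ (Nat.cast_ne_zero.mpr hm), Padic.valuation_natCast]
  norm_cast

lemma v_natCast_nonneg (m : ℕ) (hm : m ≠ 0) : (0 : WithTop ℚ) ≤ S.v (m : Ω) := by
  rw [S.v_natCast' m hm]
  exact_mod_cast Nat.cast_nonneg _

lemma v_natCast_of_not_dvd {m : ℕ} (hm : ¬ p ∣ m) : S.v (m : Ω) = 0 := by
  have hm0 : m ≠ 0 := by rintro rfl; exact hm (dvd_zero p)
  rw [S.v_natCast' m hm0, padicValNat.eq_zero_of_not_dvd hm]
  norm_num

lemma v_natCast_of_dvd {m : ℕ} (hm0 : m ≠ 0) (hm : p ∣ m) : (1 : WithTop ℚ) ≤ S.v (m : Ω) := by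
  rw [S.v_natCast' m hm0]
  have h1 : 1 ≤ padicValNat p m := one_le_padicValNat_of_dvd hm0 hm
  have h2 : 1 ≤ S.e * padicValNat p m := le_trans h1 (Nat.le_mul_of_pos_left _ S.e_pos)
  exact_mod_cast Nat.one_le_cast.mpr h2

end PadicSetup


lemma lucas_dvd_iff {p : ℕ} [Fact p.Prime] {n k : ℕ} :
    p ∣ n.choose k ↔ p ∣ (n % p).choose (k % p) * ((n / p).choose (k / p)) := by
  have h := Choose.choose_modEq_choose_mod_mul_choose_div_nat (p := p) (n := n) (k := k)
  constructor <;> intro hd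
  · exact (Nat.modEq_zero_iff_dvd).mp (h.symm.trans ((Nat.modEq_zero_iff_dvd).mpr hd))
  · exact (Nat.modEq_zero_iff_dvd).mp (h.trans ((Nat.modEq_zero_iff_dvd).mpr hd))

lemma nt1 {p : ℕ} [hp : Fact p.Prime] {e₀ : ℕ} (h : ¬ p ∣ e₀) (he : e₀ ≠ 0) :
    ∀ r : ℕ, ¬ p ∣ (p ^ r * e₀).choose (p ^ r) := by
  have hp0 : 0 < p := hp.out.pos
  intro r
  induction r with
  | zero => simpa [Nat.choose_one_right] using h
  | succ r ih =>
    rw [lucas_dvd_iff]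
    have h1 : p ^ (r+1) * e₀ = p * (p ^ r * e₀) := by ring
    have h2 : p ^ (r+1) = p * p ^ r := by ring
    rw [h1, h2, Nat.mul_mod_right, Nat.mul_mod_right, Nat.mul_div_cancel_left _ hp0,
      Nat.mul_div_cancel_left _ hp0, Nat.choose_self, one_mul]
    exact ih

lemma nt2 {p : ℕ} [hp : Fact p.Prime] {e₀ : ℕ} (he : e₀ ≠ 0) :
    ∀ r i : ℕ, 1 ≤ i → i < p ^ r → p ∣ (p ^ r * e₀).choose i := by
  have hp0 : 0 < p := hp.out.pos
  intro r
  induction r with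
  | zero => intro i h1 h2; simp at h2; omega
  | succ r ih =>
    intro i h1 h2
    rw [lucas_dvd_iff]
    have h3 : p ^ (r+1) * e₀ = p * (p ^ r * e₀) := by ring
    rw [h3, Nat.mul_mod_right, Nat.mul_div_cancel_left _ hp0]
    by_cases hi : i % p = 0
    · have hpi : p ∣ i := Nat.dvd_of_mod_eq_zero hi
      have hip1 : 1 ≤ i / p := (Nat.one_le_div_iff hp0).mpr (Nat.le_of_dvd (by omega) hpi)
      have hip2 : i / p < p ^ r := by
        apply Nat.div_lt_of_lt_mul
        first
        | (rw [← pow_succ]; exact h2)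
        | (rw [← pow_succ']; exact h2)
      have := ih (i / p) hip1 hip2
      rw [hi, Nat.choose_self, one_mul]
      exact this
    · rw [Nat.choose_eq_zero_of_lt (Nat.pos_of_ne_zero hi), zero_mul]
      exact dvd_zero p

lemma PadicSetup.alpha_facts (S : PadicSetup p K Ω) {f : K[X]} {n : ℕ} (hn : 2 ≤ n)
    (hf : S.IsEisensteinOfDegree f n) {α : Ω} (hα : aeval α f = 0) :
    α ≠ 0 ∧ ∃ a : ℚ, S.v α = ((a : ℚ) : WithTop ℚ) ∧ a ≤ 1 / n := by
  obtain ⟨hmon, hdeg, hcoef, hc0⟩ := hf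
  have hinj : Function.Injective (algebraMap K Ω) := (algebraMap K Ω).injective
  have hf0 : f.coeff 0 ≠ 0 := by
    intro h
    rw [h, map_zero, S.v_zero'] at hc0
    exact (by simp : (⊤ : WithTop ℚ) ≠ 1) hc0
  have hA0 : algebraMap K Ω (f.coeff 0) ≠ 0 := fun h => hf0 (hinj (by rw [h, map_zero]))
  have hα0 : α ≠ 0 := by
    rintro rfl
    rw [aeval_def, Polynomial.eval₂_at_zero _] at hα
    exact hA0 hα
  obtain ⟨a, ha⟩ := S.exists_rat' hα0
  refine ⟨hα0, a, ha, ?_⟩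
  by_contra hcon
  push_neg at hcon
  have hnQ : (0:ℚ) < (n:ℚ) := by exact_mod_cast (by omega : 0 < n)
  have ha0 : 0 < a := lt_trans (by positivity) hcon
  have hsum : (0:Ω) = ∑ i ∈ Finset.range (n+1), algebraMap K Ω (f.coeff i) * α ^ i := by
    rw [← hα]
    conv_lhs => rw [Polynomial.aeval_eq_sum_range]
    rw [hdeg]
    exact Finset.sum_congr rfl fun i _ => Algebra.smul_def _ _
  have hsplit := Finset.sum_range_succ' (fun i => algebraMap K Ω (f.coeff i) * α ^ i) n
  rw [← hsum] at hsplit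
  have heq : algebraMap K Ω (f.coeff 0) =
      -∑ i ∈ Finset.range n, algebraMap K Ω (f.coeff (i+1)) * α ^ (i+1) := by
    have h0 : algebraMap K Ω (f.coeff 0) * α ^ 0 = algebraMap K Ω (f.coeff 0) := by
      rw [pow_zero, mul_one]
    rw [← h0]
    linear_combination -hsplit
  set c : ℚ := min ((n:ℚ) * a) (1 + a) with hc
  have hterm : ∀ i ∈ Finset.range n,
      ((c : ℚ) : WithTop ℚ) ≤ S.v (algebraMap K Ω (f.coeff (i+1)) * α ^ (i+1)) := by
    intro i hi
    rcases eq_or_ne (f.coeff (i+1)) 0 with h | h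
    · rw [h, map_zero, zero_mul, S.v_zero']; exact le_top
    rcases eq_or_ne (i+1) n with hk | hk
    · have hcn : f.coeff (i+1) = 1 := by rw [hk, ← hdeg]; exact hmon
      rw [hcn, map_one, one_mul, S.v_pow' hα0 ha, hk]
      exact_mod_cast min_le_left _ _
    · have hkn : i + 1 < n := lt_of_le_of_ne (Finset.mem_range.mp hi) hk
      have h1 : (1 : WithTop ℚ) ≤ S.v (algebraMap K Ω (f.coeff (i+1))) := hcoef _ hkn
      have hAk : algebraMap K Ω (f.coeff (i+1)) ≠ 0 := fun hh => h (hinj (hh.trans (map_zero _).symm))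
      obtain ⟨b, hb⟩ := S.exists_rat' hAk
      rw [S.v_mul, hb, S.v_pow' hα0 ha, ← WithTop.coe_add]
      have hb1 : (1:ℚ) ≤ b := by
        rw [hb] at h1; exact_mod_cast h1
      have hk1 : (1:ℚ) ≤ ((i+1 : ℕ) : ℚ) := by exact_mod_cast Nat.one_le_iff_ne_zero.mpr (by omega)
      have : c ≤ b + ((i+1:ℕ):ℚ) * a := by
        have h5 : (1:ℚ) * a ≤ ((i+1:ℕ):ℚ) * a := mul_le_mul_of_nonneg_right hk1 ha0.le
        have := min_le_right ((n:ℚ) * a) (1 + a)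
        nlinarith
      exact_mod_cast this
  have hv : ((c : ℚ) : WithTop ℚ) ≤ S.v (algebraMap K Ω (f.coeff 0)) := by
    rw [heq, S.v_neg']
    exact S.v_sum_ge _ _ _ hterm
  rw [hc0] at hv
  have hcle : c ≤ 1 := by exact_mod_cast hv
  have h1 : 1 < (n:ℚ) * a := by
    have : (n:ℚ) * (1/n) < (n:ℚ) * a := mul_lt_mul_of_pos_left hcon hnQ
    rw [mul_one_div, div_self hnQ.ne'] at this
    exact this
  have h2 : (1:ℚ) < 1 + a := by linarith
  exact absurd hcle (not_le.mpr (lt_min h1 h2))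

lemma PadicSetup.rho_zero_eq (S : PadicSetup p K Ω) {f : K[X]} {n : ℕ} (hdeg : f.natDegree = n)
    {α : Ω} (hα0 : α ≠ 0) (hα : aeval α f = 0) : S.rho f n α 0 = 0 := by
  have h1 : ∀ k ∈ Finset.Icc 0 n, (Nat.choose k 0 : Ω) * algebraMap K Ω (f.coeff k) *
      α ^ ((k:ℤ) - (n:ℤ)) = (algebraMap K Ω (f.coeff k) * α ^ k) * (α ^ n)⁻¹ := by
    intro k hk
    rw [Nat.choose_zero_right, Nat.cast_one, one_mul, zpow_sub₀ hα0, zpow_natCast, zpow_natCast,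
      div_eq_mul_inv, mul_assoc]
  rw [PadicSetup.rho, Finset.sum_congr rfl h1, ← Finset.sum_mul]
  have h2 : Finset.Icc 0 n = Finset.range (n+1) := by ext x; simp
  have h3 : ∑ k ∈ Finset.range (n+1), algebraMap K Ω (f.coeff k) * α ^ k = aeval α f := by
    conv_rhs => rw [Polynomial.aeval_eq_sum_range]
    rw [hdeg]
    exact Finset.sum_congr rfl fun i _ => (Algebra.smul_def _ _).symm
  rw [h2, h3, hα, zero_mul]

lemma PadicSetup.rho_sub_choose (S : PadicSetup p K Ω) {f : K[X]} {n : ℕ} (hn : 2 ≤ n)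
    (hmon : f.Monic) (hdeg : f.natDegree = n)
    (hcoef : ∀ i < n, 1 ≤ S.v (algebraMap K Ω (f.coeff i)))
    {α : Ω} (hα0 : α ≠ 0) {a : ℚ} (ha : S.v α = ((a : ℚ) : WithTop ℚ)) (han : a ≤ 1 / n)
    {i : ℕ} (hi1 : 1 ≤ i) (hin : i ≤ n) :
    ((1 / (n:ℚ) : ℚ) : WithTop ℚ) ≤ S.v (S.rho f n α i - (n.choose i : Ω)) := by
  have hrho : S.rho f n α i - (n.choose i : Ω) =
      ∑ k ∈ Finset.Icc i (n-1), (Nat.choose k i : Ω) * algebraMap K Ω (f.coeff k) *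
        α ^ ((k:ℤ) - (n:ℤ)) := by
    rw [PadicSetup.rho]
    have hsplit : Finset.Icc i n = Finset.Icc i ((n-1)+1) := by congr 1; omega
    rw [hsplit, Finset.sum_Icc_succ_top (by omega : i ≤ (n-1)+1)]
    have hend : (Nat.choose ((n-1)+1) i : Ω) * algebraMap K Ω (f.coeff ((n-1)+1)) *
        α ^ ((((n-1)+1 : ℕ):ℤ) - (n:ℤ)) = (n.choose i : Ω) := by
      have hn1 : (n-1)+1 = n := by omega
      rw [hn1]
      have hcn : f.coeff n = 1 := by rw [← hdeg]; exact hmon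
      rw [hcn, map_one, mul_one, sub_self, zpow_zero, mul_one]
    rw [hend, add_sub_cancel_right]
  rw [hrho]
  apply S.v_sum_ge
  intro k hk
  rw [Finset.mem_Icc] at hk
  have hik : i ≤ k := hk.1
  have hkn : k < n := by omega
  rcases eq_or_ne (f.coeff k) 0 with h | h
  · rw [h, map_zero, mul_zero, zero_mul, S.v_zero']; exact le_top
  have hAk : algebraMap K Ω (f.coeff k) ≠ 0 := fun hh => h ((algebraMap K Ω).injective (by rw [hh, map_zero]))
  obtain ⟨b, hb⟩ := S.exists_rat' hAk
  have hb1 : (1:ℚ) ≤ b := by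
    have := hcoef k hkn
    rw [hb] at this
    exact_mod_cast this
  have hCk : k.choose i ≠ 0 := (Nat.choose_pos hik).ne'
  have hz : (k:ℤ) - (n:ℤ) = -(((n - k : ℕ) : ℤ)) := by
    push_cast [Nat.cast_sub hkn.le]
    ring
  have hzpow : S.v (α ^ ((k:ℤ) - (n:ℤ))) = ((-(((n-k:ℕ):ℚ) * a) : ℚ) : WithTop ℚ) := by
    rw [hz, zpow_neg, zpow_natCast, S.v_inv' (pow_ne_zero _ hα0) (S.v_pow' hα0 ha (n-k))]
  rw [S.v_mul, S.v_mul, hb, hzpow, S.v_natCast' _ hCk, ← WithTop.coe_add, ← WithTop.coe_add]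
  set c0 : ℚ := ((S.e * padicValNat p (k.choose i) : ℕ) : ℚ) with hc0
  have hc00 : 0 ≤ c0 := by positivity
  have hnk : ((n - k : ℕ) : ℚ) = (n:ℚ) - (k:ℚ) := by push_cast [Nat.cast_sub hkn.le]; ring
  have hnQ : (0:ℚ) < (n:ℚ) := by exact_mod_cast (by omega : 0 < n)
  set t : ℚ := 1 / (n:ℚ) with htdef
  have ht0 : 0 ≤ t := by positivity
  have htn : (n:ℚ) * t = 1 := by rw [htdef, mul_one_div, div_self hnQ.ne']
  have h5 : ((n:ℚ) - (k:ℚ)) * a ≤ ((n:ℚ) - (k:ℚ)) * t := by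
    apply mul_le_mul_of_nonneg_left _ (by exact_mod_cast sub_nonneg.mpr (by exact_mod_cast hkn.le : (k:ℚ) ≤ (n:ℚ)))
    exact han
  have h7 : ((n:ℚ) - (k:ℚ)) * t = 1 - (k:ℚ) * t := by rw [sub_mul, htn]
  have h6 : 1 * t ≤ (k:ℚ) * t := by
    apply mul_le_mul_of_nonneg_right _ ht0
    exact_mod_cast (by omega : 1 ≤ k)
  have hgoal : t ≤ c0 + b + -(((n-k:ℕ):ℚ) * a) := by
    rw [hnk]
    nlinarith
  exact_mod_cast hgoal


lemma wt_mul_nonneg' {q : ℚ} (hq : 0 < q) {x : WithTop ℚ} (hx : 0 ≤ x) :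
    (0:WithTop ℚ) ≤ ((q:ℚ):WithTop ℚ) * x := by
  induction x using WithTop.recTopCoe with
  | top => rw [WithTop.mul_top (by exact_mod_cast hq.ne' : ((q:ℚ):WithTop ℚ) ≠ 0)]; exact le_top
  | coe b => rw [← WithTop.coe_mul]; exact_mod_cast mul_nonneg hq.le (by exact_mod_cast hx)

lemma wt_mul_pos' {q : ℚ} (hq : 0 < q) {x : WithTop ℚ} (hx : 0 < x) :
    (0:WithTop ℚ) < ((q:ℚ):WithTop ℚ) * x := by
  induction x using WithTop.recTopCoe with
  | top => rw [WithTop.mul_top (by exact_mod_cast hq.ne' : ((q:ℚ):WithTop ℚ) ≠ 0)]; simp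
  | coe b => rw [← WithTop.coe_mul]; exact_mod_cast mul_pos hq (by exact_mod_cast hx)

/-- Let `f` be Eisenstein of degree `n = p^r·e₀` over `K` with
`gcd(p,e₀) = 1` and `e₀ ≠ 1`, `α` a root of `f`, and `ρ_i` the coefficients of the
ramification polynomial `ρ(x) = f(αx+α)/αⁿ`.  Then (with `v_α = n·v`): all points
`(i, v_α(ρ_i))` lie on or above the horizontal axis, `v_α(ρ_{p^r}) = v_α(ρ_n) = 0` while
`v_α(ρ_i) > 0` for `1 ≤ i < p^r`, so the Newton polygon of `ρ` has a horizontal segment of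
length `n - p^r = p^r(e₀-1)` ending at abscissa `n`; moreover for `0 ≤ j ≤ n - p^r` the
residue of the coefficient `ρ_{p^r+j}` of the residual polynomial of this segment equals
the residue of the binomial coefficient `C(n, p^r+j)` (i.e. `v_α(ρ_{p^r+j} - C(n,p^r+j)) > 0`),
and it is nonzero iff `v_p(C(n, p^r+j)) = 0`. -/
theorem horizontal_segment_residual_polynomial
    [FiniteDimensional ℚ_[p] K] [IsAlgClosed Ω] [Algebra.IsAlgebraic K Ω]
    (S : PadicSetup p K Ω)
    (f : K[X]) (n r e₀ : ℕ) (hn : n = p ^ r * e₀) (hcop : Nat.Coprime p e₀) (he₀ : e₀ ≠ 1)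
    (hf : S.IsEisensteinOfDegree f n)
    (α : Ω) (hα : aeval α f = 0) :
    n - p ^ r = p ^ r * (e₀ - 1)
    ∧ (∀ i ≤ n, (0 : WithTop ℚ) ≤ ((n : ℚ) : WithTop ℚ) * S.v (S.rho f n α i))
    ∧ ((n : ℚ) : WithTop ℚ) * S.v (S.rho f n α (p ^ r)) = 0
    ∧ ((n : ℚ) : WithTop ℚ) * S.v (S.rho f n α n) = 0
    ∧ (∀ i, 1 ≤ i → i < p ^ r → (0 : WithTop ℚ) < ((n : ℚ) : WithTop ℚ) * S.v (S.rho f n α i))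
    ∧ (∀ j ≤ n - p ^ r,
        (0 : WithTop ℚ) < S.v (S.rho f n α (p ^ r + j) - (n.choose (p ^ r + j) : Ω))
        ∧ (S.v (S.rho f n α (p ^ r + j)) = 0 ↔ ¬ (p ∣ n.choose (p ^ r + j)))) := by
  have hp : p.Prime := Fact.out
  have he0 : e₀ ≠ 0 := by
    rintro rfl
    simp [Nat.Coprime] at hcop
    exact hp.ne_one hcop
  have he2 : 2 ≤ e₀ := by omega
  have hpr1 : 1 ≤ p ^ r := Nat.one_le_pow _ _ hp.pos
  have hn2 : 2 ≤ n := by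
    rw [hn]
    calc 2 = 1 * 2 := by ring
    _ ≤ p ^ r * e₀ := Nat.mul_le_mul hpr1 he2
  have hprn : p ^ r ≤ n := by rw [hn]; exact Nat.le_mul_of_pos_right _ (by omega)
  obtain ⟨hα0, a, ha, han⟩ := S.alpha_facts hn2 hf hα
  obtain ⟨hmon, hdeg, hcoef, hc0⟩ := hf
  have hnQ : (0:ℚ) < (n:ℚ) := by exact_mod_cast (by omega : 0 < n)
  have htpos : (0 : WithTop ℚ) < ((1/(n:ℚ) : ℚ) : WithTop ℚ) := by
    exact_mod_cast (by positivity : (0:ℚ) < 1/(n:ℚ))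
  have hsub : ∀ i, 1 ≤ i → i ≤ n →
      ((1/(n:ℚ) : ℚ) : WithTop ℚ) ≤ S.v (S.rho f n α i - (n.choose i : Ω)) :=
    fun i h1 h2 => S.rho_sub_choose hn2 hmon hdeg hcoef hα0 ha han h1 h2
  have hminpos : (0:ℚ) < min (1/(n:ℚ)) 1 := lt_min (by positivity) one_pos
  have hposdvd : ∀ i, 1 ≤ i → i ≤ n → p ∣ n.choose i →
      ((min (1/(n:ℚ)) 1 : ℚ) : WithTop ℚ) ≤ S.v (S.rho f n α i) := by
    intro i h1 h2 hdvd
    have hC0 : n.choose i ≠ 0 := (Nat.choose_pos h2).ne'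
    have h3 : (1:WithTop ℚ) ≤ S.v ((n.choose i : ℕ) : Ω) := S.v_natCast_of_dvd hC0 hdvd
    have h4 := hsub i h1 h2
    have h5 : S.rho f n α i = (S.rho f n α i - (n.choose i : Ω)) + ((n.choose i : ℕ) : Ω) := by
      ring
    rw [h5]
    refine le_trans (le_min ?_ ?_) (S.v_add _ _)
    · exact le_trans (by exact_mod_cast min_le_left (1/(n:ℚ)) 1) h4
    · refine le_trans ?_ h3
      exact_mod_cast min_le_right (1/(n:ℚ)) 1
  have hminpos' : (0 : WithTop ℚ) < ((min (1/(n:ℚ)) 1 : ℚ) : WithTop ℚ) := by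
    exact_mod_cast hminpos
  have key : ∀ i, 1 ≤ i → i ≤ n → (S.v (S.rho f n α i) = 0 ↔ ¬ p ∣ n.choose i) := by
    intro i h1 h2
    constructor
    · intro hv0 hdvd
      have h6 := hposdvd i h1 h2 hdvd
      rw [hv0] at h6
      exact absurd h6 (not_le.mpr hminpos')
    · intro hdvd
      have hvC : S.v ((n.choose i : ℕ) : Ω) = 0 := S.v_natCast_of_not_dvd hdvd
      have h5 : S.rho f n α i = ((n.choose i : ℕ) : Ω) + (S.rho f n α i - (n.choose i : Ω)) := by
        ring
      rw [h5, S.v_add_eq_left' (by rw [hvC]; exact lt_of_lt_of_le htpos (hsub i h1 h2))]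
      exact hvC
  have hvnonneg : ∀ i, 1 ≤ i → i ≤ n → (0:WithTop ℚ) ≤ S.v (S.rho f n α i) := by
    intro i h1 h2
    by_cases hdvd : p ∣ n.choose i
    · exact le_trans hminpos'.le (hposdvd i h1 h2 hdvd)
    · rw [(key i h1 h2).mpr hdvd]
  refine ⟨?_, ?_, ?_, ?_, ?_, ?_⟩
  · obtain ⟨e₁, rfl⟩ : ∃ e₁, e₀ = e₁ + 1 := ⟨e₀ - 1, by omega⟩
    rw [hn]
    have h9 : p ^ r * (e₁ + 1) = p ^ r * e₁ + p ^ r := by ring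
    simp only [Nat.add_sub_cancel]
    omega
  · intro i hi
    rcases Nat.eq_zero_or_pos i with rfl | h1
    · rw [S.rho_zero_eq hdeg hα0 hα, S.v_zero',
        WithTop.mul_top (by exact_mod_cast hnQ.ne' : ((n:ℚ):WithTop ℚ) ≠ 0)]
      exact le_top
    · exact wt_mul_nonneg' hnQ (hvnonneg i h1 hi)
  · rw [(key (p^r) hpr1 hprn).mpr (by
      rw [hn]
      exact nt1 ((Nat.Prime.coprime_iff_not_dvd hp).mp hcop) he0 r), mul_zero]
  · rw [(key n (by omega) le_rfl).mpr (by
      rw [Nat.choose_self]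
      exact fun hd => hp.one_lt.ne' (Nat.dvd_one.mp hd)), mul_zero]
  · intro i h1 h2
    have hdvd : p ∣ n.choose i := by rw [hn]; exact nt2 he0 r i h1 h2
    have h6 := hposdvd i h1 (by omega) hdvd
    exact wt_mul_pos' hnQ (lt_of_lt_of_le hminpos' h6)
  · intro j hj
    have h1 : 1 ≤ p ^ r + j := by omega
    have h2 : p ^ r + j ≤ n := by omega
    exact ⟨lt_of_lt_of_le htpos (hsub _ h1 h2), key _ h1 h2⟩
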